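/- The Majumdar–Dhar map σ_G is injective: if η¹ and η² are distinct allowed stable configurations on a finite connected multigraph G with sink s, then the spanning trees σ_G(η¹) and σ_G(η²) constructed from the Burning Algorithm are distinct. -/

import Mathlib

open Set

noncomputable section

/-- Number of oriented edges with tail `x` (the degree of `x` in the multigraph). -/
def degD {Vp D : Type*} (tl : D → Vp) (x : Vp) : ℕ := {e : D | tl e = x}.ncard

/-- Unburnt sets of the Burning Algorithm: `U 0 = V⁺ \ {s}` and
`U (n+1) = {v ∈ U n : η v < deg_{U n} v}`. -/
def Up {Vp D : Type*} (tl hd : D → Vp) (s : Vp) (η : Vp → ℕ) : ℕ → Set Vp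
  | 0 => {v | v ≠ s}
  | n + 1 => {v ∈ Up tl hd s η n |
      η v < Set.ncard {e : D | tl e = v ∧ hd e ∈ Up tl hd s η n}}

/-- Burning sets: `B 0 = {s}` and `B (n+1) = {v ∈ U n : η v ≥ deg_{U n} v}`. -/
def Bp {Vp D : Type*} (tl hd : D → Vp) (s : Vp) (η : Vp → ℕ) : ℕ → Set Vp
  | 0 => {s}
  | n + 1 => {v ∈ Up tl hd s η n |
      Set.ncard {e : D | tl e = v ∧ hd e ∈ Up tl hd s η n} ≤ η v}

/-- `P_x`: the set of oriented edges from `x` to the set burning at time `i − 1`. -/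
def PsetB {Vp D : Type*} (tl hd : D → Vp) (s : Vp) (η : Vp → ℕ) (i : ℕ) (x : Vp) :
    Set D :=
  {e : D | tl e = x ∧ hd e ∈ Bp tl hd s η (i - 1)}

/-- `n_x`: the number of edges from `x` to vertices burnt strictly before time `i`. -/
def nBefore {Vp D : Type*} (tl hd : D → Vp) (s : Vp) (η : Vp → ℕ) (i : ℕ) (x : Vp) :
    ℕ :=
  Set.ncard {e : D | tl e = x ∧ hd e ∉ Up tl hd s η (i - 1)}

/-- Stability of a configuration. -/
def StableD {Vp D : Type*} (tl : D → Vp) (s : Vp) (η : Vp → ℕ) : Prop :=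
  ∀ v : Vp, v ≠ s → η v < degD tl v

/-- `η` is allowed: no nonempty set of non-sink vertices is a forbidden
subconfiguration. -/
def AllowedD {Vp D : Type*} (tl hd : D → Vp) (s : Vp) (η : Vp → ℕ) : Prop :=
  ∀ F : Set Vp, F.Nonempty → (∀ v ∈ F, v ≠ s) →
    ¬ (∀ v ∈ F, η v < Set.ncard {e : D | tl e = v ∧ hd e ∈ F})

/-- `t` is the spanning tree `σ_G(η)` of the Majumdar–Dhar construction: for every
vertex `x` burning at time `i ≥ 1`, the tree edge `t x` belongs to `P_x` (it points
to a vertex burning at time `i − 1`) and is the edge `α_{P_x,K_x}⁻¹(η x)`, i.e.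
`α_{P_x,K_x}(t x) = η x` where `K_x` starts at `deg_G x − n_x`. -/
def IsMDTree {Vp D : Type*} (tl hd : D → Vp) (s : Vp)
    (α : Vp → Set D → ℕ → D → ℕ) (η : Vp → ℕ)
    (t : {x : Vp // x ≠ s} → D) : Prop :=
  ∀ i : ℕ, 1 ≤ i → ∀ x : {x : Vp // x ≠ s}, x.val ∈ Bp tl hd s η i →
    t x ∈ PsetB tl hd s η i x.val ∧
    α x.val (PsetB tl hd s η i x.val)
      (degD tl x.val - nBefore tl hd s η i x.val) (t x) = η x.val

/-! The tree edge of a vertex burning at time `i ≥ 1` points to a vertex burning at time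
`i - 1`, so the burning time of a vertex is its depth in the tree. Two configurations with the
same tree therefore burn identically (allowedness makes every vertex burn), which gives them
the same sets `P_x` and `K_x`, and then `η x = α_{P_x,K_x}(t x)` is read off the tree. -/

section Burning

variable {Vp D : Type*} {tl hd : D → Vp} {s : Vp} {η η' : Vp → ℕ}

lemma Up_antitone : Antitone (Up tl hd s η) :=
  antitone_nat_of_succ_le fun _ _ hv => hv.1

lemma sink_notMem_Up (n : ℕ) : s ∉ Up tl hd s η n :=
  fun h => (Up_antitone (Nat.zero_le n) h : s ≠ s) rfl

lemma sink_notMem_Bp_succ (n : ℕ) : s ∉ Bp tl hd s η (n + 1) :=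
  fun h => sink_notMem_Up n h.1

lemma mem_Bp_succ_iff {x : Vp} {n : ℕ} :
    x ∈ Bp tl hd s η (n + 1) ↔ x ∈ Up tl hd s η n ∧ x ∉ Up tl hd s η (n + 1) := by
  simp only [Bp, Up, mem_ofPred_eq, not_and, not_lt]
  exact and_congr_right fun hx => ⟨fun h _ => h, fun h => h hx⟩

lemma Up_succ_eq_diff (n : ℕ) :
    Up tl hd s η (n + 1) = Up tl hd s η n \ Bp tl hd s η (n + 1) := by
  ext x
  simp only [mem_sdiff, mem_Bp_succ_iff, not_and, not_not]
  exact ⟨fun hx => ⟨Up_antitone n.le_succ hx, fun _ => hx⟩, fun ⟨hx, h⟩ => h hx⟩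

lemma Up_eq_of_Bp_eq (h : Bp tl hd s η = Bp tl hd s η') : Up tl hd s η = Up tl hd s η' := by
  funext n
  induction n with
  | zero => rfl
  | succ n ih => rw [Up_succ_eq_diff, Up_succ_eq_diff, ih, h]

/-- The unburnt sets stabilise, and a nonempty stable one is a forbidden subconfiguration. -/
lemma exists_Up_eq_empty [Finite Vp] (ha : AllowedD tl hd s η) :
    ∃ N, Up tl hd s η N = ∅ := by
  obtain ⟨N, hN⟩ := WellFoundedLT.antitone_chain_condition (f := Up tl hd s η) Up_antitone
  refine ⟨N, not_nonempty_iff_eq_empty.mp fun hne => ha _ hne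
    (fun v hv => Up_antitone (Nat.zero_le N) hv) fun v hv => ?_⟩
  have hv' : v ∈ Up tl hd s η (N + 1) := hN (N + 1) N.le_succ ▸ hv
  exact hv'.2

lemma exists_mem_Bp [Finite Vp] (ha : AllowedD tl hd s η) (x : Vp) :
    ∃ n, x ∈ Bp tl hd s η n := by
  classical
  by_cases hxs : x = s
  · exact ⟨0, hxs⟩
  have hburnt : ∃ n, x ∉ Up tl hd s η n := by
    obtain ⟨N, hN⟩ := exists_Up_eq_empty ha
    exact ⟨N, hN ▸ notMem_empty x⟩
  obtain ⟨n, hn⟩ := Nat.exists_eq_add_one_of_ne_zero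
    ((Nat.find_pos hburnt).mpr (not_not.mpr hxs)).ne'
  refine ⟨n + 1, mem_Bp_succ_iff.mpr ⟨?_, hn ▸ Nat.find_spec hburnt⟩⟩
  exact not_not.mp (Nat.find_min hburnt (hn ▸ n.lt_succ_self))

variable {α : Vp → Set D → ℕ → D → ℕ} {t : {x : Vp // x ≠ s} → D}

lemma IsMDTree.hd_mem_Bp (ht : IsMDTree tl hd s α η t) {x : {x : Vp // x ≠ s}} {i : ℕ}
    (hx : x.val ∈ Bp tl hd s η (i + 1)) : hd (t x) ∈ Bp tl hd s η i :=
  (ht (i + 1) (Nat.le_add_left 1 i) x hx).1.2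

lemma IsMDTree.burnTime_unique (ht : IsMDTree tl hd s α η t) (ht' : IsMDTree tl hd s α η' t)
    {x : Vp} {i j : ℕ} (hi : x ∈ Bp tl hd s η i) (hj : x ∈ Bp tl hd s η' j) : i = j := by
  induction i generalizing x j with
  | zero =>
    cases j with
    | zero => rfl
    | succ j =>
      have hxs : x = s := hi
      exact absurd (hxs ▸ hj) (sink_notMem_Bp_succ j)
  | succ i ih =>
    have hxs : x ≠ s := fun h => sink_notMem_Bp_succ i (h ▸ hi)
    cases j with
    | zero => exact absurd (show x = s from hj) hxs
    | succ j =>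
      exact congrArg (· + 1) (ih (ht.hd_mem_Bp (x := ⟨x, hxs⟩) hi)
        (ht'.hd_mem_Bp (x := ⟨x, hxs⟩) hj))

lemma IsMDTree.Bp_subset [Finite Vp] (ha' : AllowedD tl hd s η')
    (ht : IsMDTree tl hd s α η t) (ht' : IsMDTree tl hd s α η' t) (i : ℕ) :
    Bp tl hd s η i ⊆ Bp tl hd s η' i := fun x hx => by
  obtain ⟨j, hj⟩ := exists_mem_Bp ha' x
  rwa [ht.burnTime_unique ht' hx hj]

lemma IsMDTree.apply_eq_of_Bp_eq (hB : Bp tl hd s η = Bp tl hd s η')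
    (ht : IsMDTree tl hd s α η t) (ht' : IsMDTree tl hd s α η' t)
    {x : {x : Vp // x ≠ s}} {i : ℕ} (hi : 1 ≤ i) (hx : x.val ∈ Bp tl hd s η i) :
    η x = η' x := by
  have h := (ht i hi x hx).2
  have h' := (ht' i hi x (hB ▸ hx)).2
  simp only [PsetB, nBefore, hB, Up_eq_of_Bp_eq hB] at h
  exact h.symm.trans h'

end Burning

theorem stmt_7_general {Vp D : Type*} [Fintype Vp]
    (tl hd : D → Vp)
    (s : Vp)
    (α : Vp → Set D → ℕ → D → ℕ)
    (η₁ η₂ : Vp → ℕ)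
    (h₁a : AllowedD tl hd s η₁)
    (h₂a : AllowedD tl hd s η₂)
    (hne : ∃ x : Vp, x ≠ s ∧ η₁ x ≠ η₂ x)
    (t₁ t₂ : {x : Vp // x ≠ s} → D)
    (ht₁ : IsMDTree tl hd s α η₁ t₁) (ht₂ : IsMDTree tl hd s α η₂ t₂) :
    t₁ ≠ t₂ := by
  rintro rfl
  obtain ⟨x, hxs, hx⟩ := hne
  have hB : Bp tl hd s η₁ = Bp tl hd s η₂ :=
    funext fun i => (ht₁.Bp_subset h₂a ht₂ i).antisymm (ht₂.Bp_subset h₁a ht₁ i)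
  obtain ⟨n, hn⟩ := exists_mem_Bp h₁a x
  have hn0 : n ≠ 0 := by rintro rfl; exact hxs hn
  exact hx (ht₁.apply_eq_of_Bp_eq (x := ⟨x, hxs⟩) hB ht₂ (Nat.one_le_iff_ne_zero.mpr hn0) hn)

/-- the Majumdar–Dhar map `σ_G` is injective: distinct allowed stable
configurations `η₁ ≠ η₂` on a finite connected multigraph `G` with sink `s` yield
distinct spanning trees `σ_G(η₁) ≠ σ_G(η₂)`.  The multigraph is encoded by its set
`D` of oriented edges with tail/head maps `tl`, `hd` and reversal `rev`; `α` is the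
fixed family of bijections `α_{P,K} : P → K` used in the construction. -/
theorem stmt_7 {Vp D : Type*} [Fintype Vp] [Fintype D]
    (tl hd : D → Vp) (rev : D → D)
    (hrev : ∀ e : D, tl (rev e) = hd e ∧ hd (rev e) = tl e ∧ rev (rev e) = e)
    (hloop : ∀ e : D, tl e ≠ hd e)
    (s : Vp)
    (hconn : ∀ v : Vp,
      Relation.ReflTransGen (fun u w => ∃ e : D, tl e = u ∧ hd e = w) v s)
    (α : Vp → Set D → ℕ → D → ℕ)
    (hα : ∀ (x : Vp) (P : Set D) (j : ℕ), P.Nonempty → (∀ e ∈ P, tl e = x) →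
      Set.BijOn (α x P j) P (Set.Ico j (j + P.ncard)))
    (η₁ η₂ : Vp → ℕ)
    (h₁s : StableD tl s η₁) (h₁a : AllowedD tl hd s η₁)
    (h₂s : StableD tl s η₂) (h₂a : AllowedD tl hd s η₂)
    (hne : ∃ x : Vp, x ≠ s ∧ η₁ x ≠ η₂ x)
    (t₁ t₂ : {x : Vp // x ≠ s} → D)
    (ht₁ : IsMDTree tl hd s α η₁ t₁) (ht₂ : IsMDTree tl hd s α η₂ t₂) :
    t₁ ≠ t₂ :=
  stmt_7_general tl hd s α η₁ η₂ h₁a h₂a hne t₁ t₂ ht₁ ht₂
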